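/- Let k ≥ 2, let 0 < α₁ < α₂ < … < α_{k−1} < 1 and p₁, …, p_{k−1} ∈ (0,1] with Σ_{m=1}^{k−1} p_m = 1, and let Y be an integrable real-valued random variable having a unique α_m-quantile for each m = 1,…,k−1. Define the spectral risk measure ρ^φ(Y) := Σ_{m=1}^{k−1} p_m CVaR_{α_m}(Y). Let G_k : ℝ → ℝ be strictly convex with subgradient G_k′ and let G₁, …, G_{k−1} : ℝ → ℝ be such that for every 𝔞_k ∈ ℝ and each m = 1,…,k−1 the map x ↦ G_m(x) − (x p_m/(1−α_m)) G_k′(𝔞_k) is strictly increasing, and assume E|G_m(Y)| < ∞ for all m = 1,…,k. Define the scoring function S(𝔞₁, …, 𝔞_{k−1}, 𝔞_k, y) := Σ_{m=1}^{k−1} (1{y ≤ 𝔞_m} − α_m)(G_m(𝔞_m) − G_m(y)) − G_k(𝔞_k) + G_k(y) + G_k′(𝔞_k)[ 𝔞_k + Σ_{m=1}^{k−1} (p_m/(1−α_m))( (1{y > 𝔞_m} − (1−α_m)) 𝔞_m − 1{y > 𝔞_m} y ) ]. Then S is strictly consistent for the mapping M(Y) = (VaR_{α₁}(Y), …, VaR_{α_{k−1}}(Y),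 ρ^φ(Y)): for every 𝔞 ∈ ℝ^k with 𝔞₁ ≤ … ≤ 𝔞_{k−1} and 𝔞 ≠ M(Y), one has E[S(M(Y), Y)] < E[S(𝔞₁, …, 𝔞_k, Y)]. -/

import Mathlib

/-!
Fix the forecast `𝔞` and put `c = G_k'(𝔞_k)`. Since `𝟙{𝔞_m < y} = 1 - 𝟙{y ≤ 𝔞_m}`, the `m`-th
quantile term of `S` plus its share `c p_m / (1 - α_m)` of the CVaR term equals, up to a multiple
of `y`, the generalized piecewise linear score `(𝟙{y ≤ x} - α_m) (g_m x - g_m y)` of the strictly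
increasing `g_m = G_m - c p_m / (1 - α_m) · id`. Its expectation is uniquely minimized at the
unique `α_m`-quantile `q`: for a forecast `a ≠ q` and `x` halfway between `q` and `a`, the excess is
bounded below by `|F x - α_m| |g_m a - g_m x|`, where `F x ≠ α_m` because `x` is no quantile.

At the true values the identification term `𝔞_k + Σ p_m / (1 - α_m) E[…]` has mean zero, by
`(1 - α) CVaR_α = (1 - α) VaR_α + E (Y - VaR_α)⁺`: both `∫_α^1 (VaR_u - VaR_α) du` and
`E (Y - VaR_α)⁺` integrate the same tail `1 - F (VaR_α + t)` (layer cake). What remains of the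
difference of expected scores is the Bregman divergence of `G_k`, positive unless `𝔞_k = ρ^φ(Y)`.
-/

open MeasureTheory

/-- Value-at-risk at level `α` of the loss `X`: the `α`-quantile
`VaR_α(X) = inf {x : P(X ≤ x) ≥ α}`. -/
noncomputable def VaR {Ω : Type*} [MeasurableSpace Ω] (P : Measure Ω) (X : Ω → ℝ) (α : ℝ) : ℝ :=
  sInf {x : ℝ | α ≤ (P {ω | X ω ≤ x}).toReal}

/-- Conditional value-at-risk: `CVaR_α(X) = (1-α)⁻¹ ∫_α^1 VaR_u(X) du`. -/
noncomputable def CVaR {Ω : Type*} [MeasurableSpace Ω] (P : Measure Ω) (X : Ω → ℝ) (α : ℝ) : ℝ :=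
  (1 - α)⁻¹ * ∫ u in α..1, VaR P X u

/-- `q` is an `α`-quantile of `Y`: `P(Y < q) ≤ α ≤ P(Y ≤ q)`. -/
def IsQuantile {Ω : Type*} [MeasurableSpace Ω] (P : Measure Ω) (Y : Ω → ℝ) (α q : ℝ) : Prop :=
  (P {ω | Y ω < q}).toReal ≤ α ∧ α ≤ (P {ω | Y ω ≤ q}).toReal

open ProbabilityTheory Set Filter Topology

lemma StieltjesFunction.csInf_le_iff (f : StieltjesFunction ℝ) {u c : ℝ}
    (hne : ∃ x, u ≤ f x) (hbdd : ∃ x, f x < u) :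
    sInf {x | u ≤ f x} ≤ c ↔ u ≤ f c := by
  obtain ⟨x₀, hx₀⟩ := hbdd
  have hbdd : BddBelow {x | u ≤ f x} := ⟨x₀, fun x hx =>
    le_of_not_ge fun h => (hx.trans (f.mono h)).not_gt hx₀⟩
  refine ⟨fun h => le_trans ?_ (f.mono h), fun h => csInf_le hbdd h⟩
  have hright : Tendsto f (𝓝[>] sInf {x | u ≤ f x}) (𝓝 (f (sInf {x | u ≤ f x}))) :=
    (f.right_continuous _).mono Ioi_subset_Ici_self
  refine ge_of_tendsto hright (eventually_nhdsWithin_of_forall fun x hx => ?_)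
  obtain ⟨y, hy, hyx⟩ := exists_lt_of_csInf_lt hne hx
  exact le_trans hy (f.mono hyx.le)

noncomputable def quantileScore (α : ℝ) (g : ℝ → ℝ) (x y : ℝ) : ℝ :=
  ((if y ≤ x then 1 else 0) - α) * (g x - g y)

lemma quantileScore_sub_quantileScore_ge_of_le {g : ℝ → ℝ} (hg : Monotone g) {α q x a : ℝ}
    (hqx : q ≤ x) (hxa : x ≤ a) (y : ℝ) :
    ((if y ≤ q then 1 else 0) - α) * (g a - g q)
        + ((if y ≤ x then 1 else 0) - (if y ≤ q then 1 else 0)) * (g a - g x)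
      ≤ quantileScore α g a y - quantileScore α g q y := by
  unfold quantileScore
  rcases le_or_gt y q with hyq | hqy
  · simp only [if_pos hyq, if_pos (hyq.trans hqx), if_pos (hyq.trans (hqx.trans hxa))]
    linarith
  rcases le_or_gt y x with hyx | hxy
  · simp only [if_neg hqy.not_ge, if_pos hyx, if_pos (hyx.trans hxa)]
    linarith [hg hyx]
  rcases le_or_gt y a with hya | hay
  · simp only [if_neg hqy.not_ge, if_neg hxy.not_ge, if_pos hya]
    linarith [hg hya]
  · simp only [if_neg hqy.not_ge, if_neg hxy.not_ge, if_neg hay.not_ge]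
    linarith

lemma quantileScore_sub_quantileScore_ge_of_ge {g : ℝ → ℝ} (hg : Monotone g) {α q x a : ℝ}
    (hax : a ≤ x) (hxq : x ≤ q) (y : ℝ) :
    ((if y < q then 1 else 0) - α) * (g a - g q)
        + ((if y ≤ x then 1 else 0) - (if y < q then 1 else 0)) * (g a - g x)
      ≤ quantileScore α g a y - quantileScore α g q y := by
  unfold quantileScore
  rcases le_or_gt y a with hya | hay
  · simp only [if_pos hya, if_pos (hya.trans hax), if_pos (hya.trans (hax.trans hxq))]
    rcases (hya.trans (hax.trans hxq)).lt_or_eq with hyq | rfl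
    · simp only [if_pos hyq]; linarith
    · simp only [lt_irrefl, if_false]; linarith [hg hya, hg hax, hg hxq]
  rcases le_or_gt y x with hyx | hxy
  · simp only [if_neg hay.not_ge, if_pos hyx, if_pos (hyx.trans hxq)]
    rcases (hyx.trans hxq).lt_or_eq with hyq | rfl
    · simp only [if_pos hyq]; linarith [hg hay.le]
    · simp only [lt_irrefl, if_false]; linarith [hg hax, hg hxq]
  rcases lt_trichotomy y q with hyq | rfl | hqy
  · simp only [if_neg hay.not_ge, if_neg hxy.not_ge, if_pos hyq, if_pos hyq.le]
    linarith [hg hxy.le]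
  · simp only [if_neg hay.not_ge, if_neg hxy.not_ge, lt_irrefl, if_false, le_refl, if_true]
    linarith
  · simp only [if_neg hay.not_ge, if_neg hxy.not_ge, if_neg hqy.not_gt, if_neg hqy.not_ge]
    linarith

noncomputable def cvarIdentification (α x y : ℝ) : ℝ :=
  ((if x < y then 1 else 0) - (1 - α)) * x - (if x < y then 1 else 0) * y

lemma cvarIdentification_eq (α x y : ℝ) :
    cvarIdentification α x y = -max (y - x) 0 - (1 - α) * x := by
  unfold cvarIdentification
  split_ifs with h
  · rw [max_eq_left (by linarith)]; ring
  · rw [max_eq_right (by linarith)]; ring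

lemma quantileScore_add_mul_cvarIdentification {G g : ℝ → ℝ} {κ : ℝ}
    (hg : ∀ t, g t = G t - κ * t) (α x y : ℝ) :
    quantileScore α G x y + κ * cvarIdentification α x y
      = quantileScore α g x y - κ * (1 - α) * y := by
  simp only [quantileScore, cvarIdentification, hg]
  rcases le_or_gt y x with h | h
  · simp only [if_pos h, if_neg h.not_gt]; ring
  · simp only [if_neg h.not_ge, if_pos h]; ring

/-- The score `S` with the slope `G_k'(𝔞_k)` replaced by a free parameter `c`. -/
noncomputable def spectralScore {ι : Type*} (K : Finset ι) (α p : ι → ℝ) (G : ι → ℝ → ℝ)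
    (H : ℝ → ℝ) (c : ℝ) (b : ι → ℝ) (z y : ℝ) : ℝ :=
  (∑ m ∈ K, quantileScore (α m) (G m) (b m) y) - H z + H y
    + c * (z + ∑ m ∈ K, p m / (1 - α m) * cvarIdentification (α m) (b m) y)

lemma ite_one_zero_eq_indicator {Ω : Type*} (p : Ω → Prop) [DecidablePred p] :
    (fun ω => if p ω then (1 : ℝ) else 0) = {ω | p ω}.indicator 1 := by
  ext ω
  by_cases h : p ω <;> simp [h]

lemma integral_ite_one_zero {Ω : Type*} [MeasurableSpace Ω] {P : Measure Ω} {p : Ω → Prop}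
    [DecidablePred p] (hp : MeasurableSet {ω | p ω}) :
    ∫ ω, (if p ω then (1 : ℝ) else 0) ∂P = (P {ω | p ω}).toReal := by
  rw [ite_one_zero_eq_indicator, integral_indicator_one hp, measureReal_def]

section

variable {Ω : Type*} [MeasurableSpace Ω] {P : Measure Ω} [IsProbabilityMeasure P] {Y : Ω → ℝ}

lemma toReal_measure_le_eq_cdf (hY : Measurable Y) (x : ℝ) :
    (P {ω | Y ω ≤ x}).toReal = cdf (P.map Y) x := by
  have := Measure.isProbabilityMeasure_map (μ := P) hY.aemeasurable
  rw [cdf_eq_real, measureReal_def, Measure.map_apply hY measurableSet_Iic]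
  rfl

lemma VaR_le_iff (hY : Measurable Y) {u c : ℝ} (hu0 : 0 < u) (hu1 : u < 1) :
    VaR P Y u ≤ c ↔ u ≤ (P {ω | Y ω ≤ c}).toReal := by
  simp only [VaR, toReal_measure_le_eq_cdf hY]
  exact (cdf (P.map Y)).csInf_le_iff ((tendsto_cdf_atTop _).eventually_const_le hu1).exists
    ((tendsto_cdf_atBot _).eventually_lt_const hu0).exists

lemma lt_VaR_iff (hY : Measurable Y) {u c : ℝ} (hu0 : 0 < u) (hu1 : u < 1) :
    c < VaR P Y u ↔ (P {ω | Y ω ≤ c}).toReal < u := by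
  simpa only [not_le] using (VaR_le_iff hY hu0 hu1).not

lemma monotoneOn_VaR (hY : Measurable Y) : MonotoneOn (VaR P Y) (Ioo 0 1) :=
  fun _ hu _ hv huv =>
    (VaR_le_iff hY hu.1 hu.2).2 <| huv.trans ((VaR_le_iff hY hv.1 hv.2).1 le_rfl)

lemma VaR_eq_of_isQuantile_unique (hY : Measurable Y) {α q : ℝ} (hα0 : 0 < α) (hα1 : α < 1)
    (hq : IsQuantile P Y α q) (huniq : ∀ r, IsQuantile P Y α r → r = q) :
    VaR P Y α = q := by
  refine le_antisymm ((VaR_le_iff hY hα0 hα1).2 hq.2) (not_lt.1 fun hlt => hlt.ne ?_)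
  exact huniq _ ⟨(measureReal_mono fun ω h => lt_trans h hlt).trans hq.1,
    (VaR_le_iff hY hα0 hα1).1 le_rfl⟩

lemma lintegral_ofReal_VaR_sub_VaR (hY : Measurable Y) {α : ℝ} (hα0 : 0 < α) (hα1 : α < 1) :
    ∫⁻ u in Ioo α 1, ENNReal.ofReal (VaR P Y u - VaR P Y α)
      = ∫⁻ ω, ENNReal.ofReal (max (Y ω - VaR P Y α) 0) ∂P := by
  set q := VaR P Y α
  have hVaR_mono : MonotoneOn (VaR P Y) (Ioo α 1) :=
    (monotoneOn_VaR hY).mono (Ioo_subset_Ioo_left hα0.le)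
  have hq_le : ∀ u ∈ Ioo α 1, q ≤ VaR P Y u := fun u hu =>
    monotoneOn_VaR hY ⟨hα0, hα1⟩ ⟨hα0.trans hu.1, hu.2⟩ hu.1.le
  rw [lintegral_eq_lintegral_meas_lt _
      ((ae_restrict_iff' measurableSet_Ioo).2 (.of_forall fun u hu => sub_nonneg.2 (hq_le u hu)))
      ((aemeasurable_restrict_of_monotoneOn measurableSet_Ioo hVaR_mono).sub_const q),
    lintegral_eq_lintegral_meas_lt _ (.of_forall fun ω => le_max_right (Y ω - q) 0)
      ((hY.sub_const q).max measurable_const).aemeasurable]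
  refine setLIntegral_congr_fun measurableSet_Ioi fun t (ht : 0 < t) => ?_
  -- both sides are the tail `1 - F (q + t)` of the distribution function `F` of `Y`
  have hF : α ≤ (P {ω | Y ω ≤ q + t}).toReal :=
    (VaR_le_iff hY hα0 hα1).1 (by linarith)
  have hVaR_tail : {u | t < VaR P Y u - q} ∩ Ioo α 1 = Ioo (P {ω | Y ω ≤ q + t}).toReal 1 := by
    ext u
    change t < VaR P Y u - q ∧ u ∈ Ioo α 1 ↔ _
    simp only [mem_Ioo]
    constructor
    · rintro ⟨h, hαu, hu1⟩
      exact ⟨(lt_VaR_iff hY (hα0.trans hαu) hu1).1 (by linarith), hu1⟩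
    · rintro ⟨h, hu1⟩
      exact ⟨by linarith [(lt_VaR_iff hY (hα0.trans_le (hF.trans h.le)) hu1).2 h],
        hF.trans_lt h, hu1⟩
  have hY_tail : {ω | t < max (Y ω - q) 0} = {ω | Y ω ≤ q + t}ᶜ := by
    ext ω
    change t < max (Y ω - q) 0 ↔ ¬ Y ω ≤ q + t
    rw [lt_max_iff, or_iff_left ht.not_gt, not_le, lt_sub_iff_add_lt']
  rw [Measure.restrict_apply' measurableSet_Ioo, hVaR_tail, Real.volume_Ioo, hY_tail,
    prob_compl_eq_one_sub (s := {ω | Y ω ≤ q + t}) (hY measurableSet_Iic),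
    ENNReal.ofReal_sub _ ENNReal.toReal_nonneg, ENNReal.ofReal_one,
    ENNReal.ofReal_toReal (measure_ne_top _ _)]

theorem integrableOn_and_integral_VaR_sub_VaR (hY : Measurable Y) (hYi : Integrable Y P) {α : ℝ}
    (hα0 : 0 < α) (hα1 : α < 1) :
    IntegrableOn (fun u => VaR P Y u - VaR P Y α) (Ioo α 1) ∧
      ∫ u in Ioo α 1, (VaR P Y u - VaR P Y α) = ∫ ω, max (Y ω - VaR P Y α) 0 ∂P := by
  set q := VaR P Y α
  have hpos : Integrable (fun ω => max (Y ω - q) 0) P := (hYi.sub (integrable_const q)).pos_part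
  have hnonneg : 0 ≤ᵐ[volume.restrict (Ioo α 1)] fun u => VaR P Y u - q :=
    (ae_restrict_iff' measurableSet_Ioo).2 <| .of_forall fun u hu =>
      sub_nonneg.2 (monotoneOn_VaR hY ⟨hα0, hα1⟩ ⟨hα0.trans hu.1, hu.2⟩ hu.1.le)
  have hmeas : AEMeasurable (fun u => VaR P Y u - q) (volume.restrict (Ioo α 1)) :=
    (aemeasurable_restrict_of_monotoneOn measurableSet_Ioo
      ((monotoneOn_VaR hY).mono (Ioo_subset_Ioo_left hα0.le))).sub_const q
  have hlin := lintegral_ofReal_VaR_sub_VaR (P := P) hY hα0 hα1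
  refine ⟨⟨hmeas.aestronglyMeasurable, (hasFiniteIntegral_iff_ofReal hnonneg).2 ?_⟩, ?_⟩
  · exact hlin ▸ hpos.lintegral_lt_top
  · rw [integral_eq_lintegral_of_nonneg_ae hnonneg hmeas.aestronglyMeasurable,
      integral_eq_lintegral_of_nonneg_ae (.of_forall fun ω => le_max_right (Y ω - q) 0)
        hpos.aestronglyMeasurable, hlin]

theorem one_sub_mul_CVaR (hY : Measurable Y) (hYi : Integrable Y P) {α : ℝ}
    (hα0 : 0 < α) (hα1 : α < 1) :
    (1 - α) * CVaR P Y α = (1 - α) * VaR P Y α + ∫ ω, max (Y ω - VaR P Y α) 0 ∂P := by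
  obtain ⟨hint, heq⟩ := integrableOn_and_integral_VaR_sub_VaR hY hYi hα0 hα1
  have hsplit : ∫ u in Ioo α 1, VaR P Y u
      = (∫ u in Ioo α 1, (VaR P Y u - VaR P Y α)) + ∫ _ in Ioo α 1, VaR P Y α := by
    rw [← integral_add hint (integrableOn_const measure_Ioo_lt_top.ne)]
    simp
  rw [CVaR, ← mul_assoc, mul_inv_cancel₀ (sub_ne_zero.2 hα1.ne'), one_mul,
    intervalIntegral.integral_of_le hα1.le, integral_Ioc_eq_integral_Ioo, hsplit, heq,
    setIntegral_const, measureReal_def, Real.volume_Ioo, ENNReal.toReal_ofReal (by linarith),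
    smul_eq_mul, add_comm]

lemma integrable_ite_one_zero {p : Ω → Prop} [DecidablePred p] (hp : MeasurableSet {ω | p ω}) :
    Integrable (fun ω => if p ω then (1 : ℝ) else 0) P := by
  rw [ite_one_zero_eq_indicator]
  exact (integrable_const 1).indicator hp

lemma integrable_ite_one_zero_sub_mul {p : Ω → Prop} [DecidablePred p]
    (hp : MeasurableSet {ω | p ω}) {h : Ω → ℝ} (hh : Integrable h P) (β : ℝ) :
    Integrable (fun ω => ((if p ω then 1 else 0) - β) * h ω) P := by
  refine hh.bdd_mul (c := 1 + |β|)
    ((integrable_ite_one_zero hp).sub (integrable_const β)).aestronglyMeasurable (.of_forall ?_)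
  intro ω
  refine (norm_sub_le _ _).trans (add_le_add ?_ le_rfl)
  split_ifs <;> simp

lemma integral_ite_one_zero_sub_mul_add {p p' : Ω → Prop} [DecidablePred p] [DecidablePred p']
    (hp : MeasurableSet {ω | p ω}) (hp' : MeasurableSet {ω | p' ω}) (β d d' : ℝ) :
    ∫ ω, (((if p ω then 1 else 0) - β) * d
        + ((if p' ω then 1 else 0) - (if p ω then 1 else 0)) * d') ∂P
      = ((P {ω | p ω}).toReal - β) * d
        + ((P {ω | p' ω}).toReal - (P {ω | p ω}).toReal) * d' := by
  have h := integrable_ite_one_zero (P := P) hp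
  have h' := integrable_ite_one_zero (P := P) hp'
  rw [integral_add ((h.sub' (integrable_const β)).mul_const d) ((h'.sub' h).mul_const d'),
    integral_mul_const, integral_mul_const, integral_sub h (integrable_const β), integral_sub h' h,
    integral_ite_one_zero hp, integral_ite_one_zero hp', integral_const, probReal_univ, one_smul]

lemma integrable_quantileScore (hY : Measurable Y) {g : ℝ → ℝ}
    (hgY : Integrable (fun ω => g (Y ω)) P) (α x : ℝ) :
    Integrable (fun ω => quantileScore α g x (Y ω)) P :=
  integrable_ite_one_zero_sub_mul (hY measurableSet_Iic) ((integrable_const _).sub hgY) α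

lemma integral_quantileScore_lt_of_lt (hY : Measurable Y) {α q a : ℝ} (hq : IsQuantile P Y α q)
    (huniq : ∀ r, IsQuantile P Y α r → r = q) {g : ℝ → ℝ} (hg : StrictMono g)
    (hgY : Integrable (fun ω => g (Y ω)) P) (hqa : q < a) :
    ∫ ω, quantileScore α g q (Y ω) ∂P < ∫ ω, quantileScore α g a (Y ω) ∂P := by
  set x := (q + a) / 2
  have hqx : q < x := by simp only [x]; linarith
  have hxa : x < a := by simp only [x]; linarith
  have hle_q : MeasurableSet {ω | Y ω ≤ q} := hY measurableSet_Iic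
  have hle_x : MeasurableSet {ω | Y ω ≤ x} := hY measurableSet_Iic
  have hF_mono : (P {ω | Y ω ≤ q}).toReal ≤ (P {ω | Y ω ≤ x}).toReal :=
    measureReal_mono fun ω h => le_trans h hqx.le
  -- `x > q` is no `α`-quantile, so `Y` has more than mass `α` on `(-∞, x]`
  have hFx : α < (P {ω | Y ω ≤ x}).toReal := by
    by_contra! h
    exact hqx.ne' (huniq x ⟨(measureReal_mono fun ω (h : Y ω < x) => h.le).trans h,
      hq.2.trans hF_mono⟩)
  have hbound : ∫ ω, (((if Y ω ≤ q then 1 else 0) - α) * (g a - g q)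
        + ((if Y ω ≤ x then 1 else 0) - (if Y ω ≤ q then 1 else 0)) * (g a - g x)) ∂P
      ≤ ∫ ω, (quantileScore α g a (Y ω) - quantileScore α g q (Y ω)) ∂P :=
    integral_mono ((integrable_ite_one_zero_sub_mul hle_q (integrable_const _) α).add
      (((integrable_ite_one_zero hle_x).sub (integrable_ite_one_zero hle_q)).mul_const _))
      ((integrable_quantileScore hY hgY α a).sub (integrable_quantileScore hY hgY α q))
      fun ω => quantileScore_sub_quantileScore_ge_of_le hg.monotone hqx.le hxa.le (Y ω)
  rw [integral_ite_one_zero_sub_mul_add hle_q hle_x,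
    integral_sub (integrable_quantileScore hY hgY α a) (integrable_quantileScore hY hgY α q)]
    at hbound
  -- the lower bound is at least `(F x - α) (g a - g x) > 0`, where `F q ≥ α` and `g q < g x`
  nlinarith [hq.2, hg hqx, hg hxa]

lemma integral_quantileScore_lt_of_gt (hY : Measurable Y) {α q a : ℝ} (hq : IsQuantile P Y α q)
    (huniq : ∀ r, IsQuantile P Y α r → r = q) {g : ℝ → ℝ} (hg : StrictMono g)
    (hgY : Integrable (fun ω => g (Y ω)) P) (haq : a < q) :
    ∫ ω, quantileScore α g q (Y ω) ∂P < ∫ ω, quantileScore α g a (Y ω) ∂P := by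
  set x := (a + q) / 2
  have hax : a < x := by simp only [x]; linarith
  have hxq : x < q := by simp only [x]; linarith
  have hlt_q : MeasurableSet {ω | Y ω < q} := hY measurableSet_Iio
  have hle_x : MeasurableSet {ω | Y ω ≤ x} := hY measurableSet_Iic
  -- `x < q` is no `α`-quantile, so `Y` has less than mass `α` on `(-∞, x]`
  have hFx : (P {ω | Y ω ≤ x}).toReal < α := by
    by_contra! h
    exact hxq.ne (huniq x ⟨(measureReal_mono fun ω (h : Y ω < x) => h.trans hxq).trans hq.1, h⟩)
  have hbound : ∫ ω, (((if Y ω < q then 1 else 0) - α) * (g a - g q)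
        + ((if Y ω ≤ x then 1 else 0) - (if Y ω < q then 1 else 0)) * (g a - g x)) ∂P
      ≤ ∫ ω, (quantileScore α g a (Y ω) - quantileScore α g q (Y ω)) ∂P :=
    integral_mono ((integrable_ite_one_zero_sub_mul hlt_q (integrable_const _) α).add
      (((integrable_ite_one_zero hle_x).sub (integrable_ite_one_zero hlt_q)).mul_const _))
      ((integrable_quantileScore hY hgY α a).sub (integrable_quantileScore hY hgY α q))
      fun ω => quantileScore_sub_quantileScore_ge_of_ge hg.monotone hax.le hxq.le (Y ω)
  rw [integral_ite_one_zero_sub_mul_add hlt_q hle_x,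
    integral_sub (integrable_quantileScore hY hgY α a) (integrable_quantileScore hY hgY α q)]
    at hbound
  nlinarith [hq.1, hg hax, hg hxq]

theorem integral_quantileScore_lt (hY : Measurable Y) {α q a : ℝ} (hq : IsQuantile P Y α q)
    (huniq : ∀ r, IsQuantile P Y α r → r = q) {g : ℝ → ℝ} (hg : StrictMono g)
    (hgY : Integrable (fun ω => g (Y ω)) P) (ha : a ≠ q) :
    ∫ ω, quantileScore α g q (Y ω) ∂P < ∫ ω, quantileScore α g a (Y ω) ∂P :=
  ha.lt_or_gt.elim (integral_quantileScore_lt_of_gt hY hq huniq hg hgY)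
    (integral_quantileScore_lt_of_lt hY hq huniq hg hgY)

lemma integrable_cvarIdentification (hYi : Integrable Y P) (α x : ℝ) :
    Integrable (fun ω => cvarIdentification α x (Y ω)) P := by
  simp only [cvarIdentification_eq]
  exact (hYi.sub (integrable_const x)).pos_part.neg.sub (integrable_const _)

theorem integral_cvarIdentification_VaR (hY : Measurable Y) (hYi : Integrable Y P) {α : ℝ}
    (hα0 : 0 < α) (hα1 : α < 1) :
    ∫ ω, cvarIdentification α (VaR P Y α) (Y ω) ∂P = -((1 - α) * CVaR P Y α) := by
  have hpos : Integrable (fun ω => max (Y ω - VaR P Y α) 0) P :=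
    (hYi.sub (integrable_const _)).pos_part
  simp only [cvarIdentification_eq]
  rw [integral_sub hpos.fun_neg (integrable_const _), integral_neg,
    integral_const, probReal_univ, one_smul, one_sub_mul_CVaR hY hYi hα0 hα1]
  ring

theorem integral_quantileScore_add_mul_cvarIdentification_lt (hY : Measurable Y)
    (hYi : Integrable Y P) {α q a κ : ℝ} (hq : IsQuantile P Y α q)
    (huniq : ∀ r, IsQuantile P Y α r → r = q) {G g : ℝ → ℝ} (hg : ∀ t, g t = G t - κ * t)
    (hg_mono : StrictMono g) (hGY : Integrable (fun ω => G (Y ω)) P) (ha : a ≠ q) :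
    ∫ ω, quantileScore α G q (Y ω) ∂P + κ * ∫ ω, cvarIdentification α q (Y ω) ∂P
      < ∫ ω, quantileScore α G a (Y ω) ∂P + κ * ∫ ω, cvarIdentification α a (Y ω) ∂P := by
  have hgY : Integrable (fun ω => g (Y ω)) P := by
    simp only [hg]
    exact hGY.sub (hYi.const_mul κ)
  have key : ∀ x, ∫ ω, quantileScore α G x (Y ω) ∂P + κ * ∫ ω, cvarIdentification α x (Y ω) ∂P
      = ∫ ω, quantileScore α g x (Y ω) ∂P - κ * (1 - α) * ∫ ω, Y ω ∂P := fun x => by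
    rw [← integral_const_mul, ← integral_const_mul,
      ← integral_add (integrable_quantileScore hY hGY α x)
        ((integrable_cvarIdentification hYi α x).const_mul κ),
      ← integral_sub (integrable_quantileScore hY hgY α x) (hYi.const_mul _)]
    simp only [quantileScore_add_mul_cvarIdentification hg]
  rw [key, key]
  linarith [integral_quantileScore_lt hY hq huniq hg_mono hgY ha]

theorem integral_spectralScore {ι : Type*} (K : Finset ι) (α p : ι → ℝ) {G : ι → ℝ → ℝ}
    {H : ℝ → ℝ} (c : ℝ) (b : ι → ℝ) (z : ℝ) (hY : Measurable Y) (hYi : Integrable Y P)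
    (hGY : ∀ m ∈ K, Integrable (fun ω => G m (Y ω)) P) (hHY : Integrable (fun ω => H (Y ω)) P) :
    ∫ ω, spectralScore K α p G H c b z (Y ω) ∂P
      = (∑ m ∈ K, ∫ ω, quantileScore (α m) (G m) (b m) (Y ω) ∂P) - H z + ∫ ω, H (Y ω) ∂P
        + c * (z + ∑ m ∈ K, p m / (1 - α m) * ∫ ω, cvarIdentification (α m) (b m) (Y ω) ∂P) := by
  have hscore : Integrable (fun ω => ∑ m ∈ K, quantileScore (α m) (G m) (b m) (Y ω)) P :=
    integrable_finsetSum K fun m hm => integrable_quantileScore hY (hGY m hm) (α m) (b m)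
  have hident : ∀ m ∈ K, Integrable
      (fun ω => p m / (1 - α m) * cvarIdentification (α m) (b m) (Y ω)) P :=
    fun m _ => (integrable_cvarIdentification hYi (α m) (b m)).const_mul _
  have hscore_sub := hscore.sub' (integrable_const (H z))
  have hidents := (integrable_const z).fun_add (integrable_finsetSum K hident)
  unfold spectralScore
  rw [integral_add (hscore_sub.fun_add hHY) (hidents.const_mul c), integral_add hscore_sub hHY,
    integral_sub hscore (integrable_const _), integral_const_mul,
    integral_add (integrable_const z) (integrable_finsetSum K hident),
    integral_finsetSum K fun m hm => integrable_quantileScore hY (hGY m hm) (α m) (b m),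
    integral_finsetSum K hident]
  simp only [integral_const, probReal_univ, one_smul, integral_const_mul]

theorem integral_spectralScore_lt {ι : Type*} {K : Finset ι} {α p : ι → ℝ} {G : ι → ℝ → ℝ}
    {H H' : ℝ → ℝ} (hY : Measurable Y) (hYi : Integrable Y P)
    (hGY : ∀ m ∈ K, Integrable (fun ω => G m (Y ω)) P) (hHY : Integrable (fun ω => H (Y ω)) P)
    (hH : ∀ x y, y ≠ x → H x + H' x * (y - x) < H y) {b a : ι → ℝ} {zb za : ℝ}
    (hb : ∀ m ∈ K, IsQuantile P Y (α m) (b m) ∧ ∀ r, IsQuantile P Y (α m) r → r = b m)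
    (hzb : zb + ∑ m ∈ K, p m / (1 - α m) * ∫ ω, cvarIdentification (α m) (b m) (Y ω) ∂P = 0)
    (hG : ∀ m ∈ K, StrictMono fun x => G m x - x * p m / (1 - α m) * H' za)
    (hne : za ≠ zb ∨ ∃ m ∈ K, a m ≠ b m) :
    ∫ ω, spectralScore K α p G H (H' zb) b zb (Y ω) ∂P
      < ∫ ω, spectralScore K α p G H (H' za) a za (Y ω) ∂P := by
  set c := H' za
  let T : ι → ℝ → ℝ := fun m x => ∫ ω, quantileScore (α m) (G m) x (Y ω) ∂P
    + p m / (1 - α m) * c * ∫ ω, cvarIdentification (α m) x (Y ω) ∂P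
  have hT_lt : ∀ m ∈ K, a m ≠ b m → T m (b m) < T m (a m) := fun m hm h =>
    integral_quantileScore_add_mul_cvarIdentification_lt hY hYi (hb m hm).1 (hb m hm).2
      (fun t => by ring) (hG m hm) (hGY m hm) h
  have hT_le : ∀ m ∈ K, T m (b m) ≤ T m (a m) := fun m hm =>
    (eq_or_ne (a m) (b m)).elim (fun h => h ▸ le_rfl) fun h => (hT_lt m hm h).le
  have hT_sum : ∀ x : ι → ℝ, ∑ m ∈ K, T m (x m)
      = ∑ m ∈ K, ∫ ω, quantileScore (α m) (G m) (x m) (Y ω) ∂P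
        + c * ∑ m ∈ K, p m / (1 - α m) * ∫ ω, cvarIdentification (α m) (x m) (Y ω) ∂P := by
    intro x
    rw [Finset.sum_add_distrib, Finset.mul_sum]
    congr 1
    exact Finset.sum_congr rfl fun m _ => by ring
  have hbreg : H za + c * (zb - za) ≤ H zb :=
    (eq_or_ne zb za).elim (fun h => by simp [h]) fun h => (hH za zb h).le
  rw [integral_spectralScore K α p _ b zb hY hYi hGY hHY,
    integral_spectralScore K α p _ a za hY hYi hGY hHY, hzb, mul_zero, add_zero]
  have hzb' := eq_neg_of_add_eq_zero_right hzb
  have hb_sum := hT_sum b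
  have ha_sum := hT_sum a
  rw [hzb'] at hb_sum
  rcases hne with hz | ⟨m, hm, hm'⟩
  · linarith [Finset.sum_le_sum hT_le, hH za zb hz.symm]
  · linarith [Finset.sum_lt_sum hT_le ⟨m, hm, hT_lt m hm hm'⟩]

end

theorem spectral_score_strictly_consistent_general {Ω : Type*} [MeasurableSpace Ω] (P : Measure Ω)
    [IsProbabilityMeasure P] (k : ℕ) (hk : 2 ≤ k)
    (α p : ℕ → ℝ)
    (hα0 : 0 < α 1) (hα1 : α (k - 1) < 1)
    (hαmono : ∀ m : ℕ, 1 ≤ m → m + 1 ≤ k - 1 → α m < α (m + 1))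
    (Y : Ω → ℝ) (hYm : Measurable Y) (hY : Integrable Y P)
    (huniq : ∀ m ∈ Finset.Icc 1 (k - 1), ∃! q : ℝ, IsQuantile P Y (α m) q)
    (G : ℕ → ℝ → ℝ) (Gk' : ℝ → ℝ)
    -- G k is strictly convex with subgradient Gk'
    (hGkstrict : ∀ x y : ℝ, y ≠ x → G k x + Gk' x * (y - x) < G k y)
    -- for every 𝔞_k and each m, the map x ↦ G_m(x) − (x p_m/(1−α_m)) G_k'(𝔞_k)
    -- is strictly increasing
    (hGm : ∀ ak : ℝ, ∀ m ∈ Finset.Icc 1 (k - 1),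
      StrictMono (fun x => G m x - x * p m / (1 - α m) * Gk' ak))
    (hGint : ∀ m ∈ Finset.Icc 1 k, Integrable (fun ω => G m (Y ω)) P)
    (S : (ℕ → ℝ) → ℝ → ℝ)
    (hS : ∀ (a : ℕ → ℝ) (y : ℝ), S a y =
      (∑ m ∈ Finset.Icc 1 (k - 1),
        ((if y ≤ a m then (1:ℝ) else 0) - α m) * (G m (a m) - G m y))
      - G k (a k) + G k y
      + Gk' (a k) * (a k + ∑ m ∈ Finset.Icc 1 (k - 1),
          p m / (1 - α m) * (((if a m < y then (1:ℝ) else 0) - (1 - α m)) * a m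
            - (if a m < y then (1:ℝ) else 0) * y)))
    (M : ℕ → ℝ)
    (hMvar : ∀ m ∈ Finset.Icc 1 (k - 1), M m = VaR P Y (α m))
    (hMspec : M k = ∑ m ∈ Finset.Icc 1 (k - 1), p m * CVaR P Y (α m)) :
    ∀ a : ℕ → ℝ, (∀ m : ℕ, 1 ≤ m → m + 1 ≤ k - 1 → a m ≤ a (m + 1)) →
      (∃ m ∈ Finset.Icc 1 k, a m ≠ M m) →
      ∫ ω, S M (Y ω) ∂P < ∫ ω, S a (Y ω) ∂P := by
  intro a _ hne
  set K := Finset.Icc 1 (k - 1)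
  have hα_mono : MonotoneOn α (Icc 1 (k - 1)) :=
    monotoneOn_of_le_succ ordConnected_Icc fun m _ hm hm' => (hαmono m hm.1 hm'.2).le
  have hαK : ∀ m ∈ K, 0 < α m ∧ α m < 1 := fun m hm => by
    have hm : m ∈ Icc 1 (k - 1) := Finset.mem_Icc.1 hm
    exact ⟨hα0.trans_le (hα_mono ⟨le_rfl, hm.1.trans hm.2⟩ hm hm.1),
      (hα_mono hm ⟨hm.1.trans hm.2, le_rfl⟩ hm.2).trans_lt hα1⟩
  have hMK : ∀ m ∈ K, IsQuantile P Y (α m) (M m) ∧ ∀ r, IsQuantile P Y (α m) r → r = M m := by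
    intro m hm
    obtain ⟨q, hq, hq_uniq⟩ := huniq m hm
    rw [hMvar m hm, VaR_eq_of_isQuantile_unique hYm (hαK m hm).1 (hαK m hm).2 hq hq_uniq]
    exact ⟨hq, hq_uniq⟩
  have hMk : M k + ∑ m ∈ K, p m / (1 - α m) * ∫ ω, cvarIdentification (α m) (M m) (Y ω) ∂P
      = 0 := by
    rw [hMspec, ← Finset.sum_add_distrib]
    refine Finset.sum_eq_zero fun m hm => ?_
    rw [hMvar m hm, integral_cvarIdentification_VaR hYm hY (hαK m hm).1 (hαK m hm).2]
    field_simp [sub_ne_zero.2 (hαK m hm).2.ne']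
    ring
  have hS_eq : ∀ b, S b = spectralScore K α p G (G k) (Gk' (b k)) b (b k) := fun b =>
    funext fun y => hS b y
  have hGK : ∀ m ∈ K, Integrable (fun ω => G m (Y ω)) P := fun m hm =>
    hGint m (Finset.Icc_subset_Icc_right (Nat.sub_le k 1) hm)
  rw [hS_eq, hS_eq]
  refine integral_spectralScore_lt hYm hY hGK (hGint k (Finset.mem_Icc.2 ⟨by omega, le_rfl⟩))
    hGkstrict hMK hMk (hGm (a k)) ?_
  obtain ⟨m, hm, hm'⟩ := hne
  rcases eq_or_ne m k with rfl | hmk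
  · exact .inl hm'
  · have hm := Finset.mem_Icc.1 hm
    exact .inr ⟨m, Finset.mem_Icc.2 ⟨hm.1, by omega⟩, hm'⟩

/-- Fissler–Ziegel scoring functions for spectral risk measures with finitely supported
spectrum: strict consistency for `(VaR_{α₁}, …, VaR_{α_{k−1}}, ρ^φ)`. -/
theorem spectral_score_strictly_consistent {Ω : Type*} [MeasurableSpace Ω] (P : Measure Ω)
    [IsProbabilityMeasure P] (k : ℕ) (hk : 2 ≤ k)
    (α p : ℕ → ℝ)
    (hα0 : 0 < α 1) (hα1 : α (k - 1) < 1)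
    (hαmono : ∀ m : ℕ, 1 ≤ m → m + 1 ≤ k - 1 → α m < α (m + 1))
    (hp : ∀ m ∈ Finset.Icc 1 (k - 1), p m ∈ Set.Ioc (0:ℝ) 1)
    (hpsum : ∑ m ∈ Finset.Icc 1 (k - 1), p m = 1)
    (Y : Ω → ℝ) (hYm : Measurable Y) (hY : Integrable Y P)
    (huniq : ∀ m ∈ Finset.Icc 1 (k - 1), ∃! q : ℝ, IsQuantile P Y (α m) q)
    (G : ℕ → ℝ → ℝ) (Gk' : ℝ → ℝ)
    -- G k is strictly convex with subgradient Gk'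
    (hGk : ∀ x y : ℝ, G k x + Gk' x * (y - x) ≤ G k y)
    (hGkstrict : ∀ x y : ℝ, y ≠ x → G k x + Gk' x * (y - x) < G k y)
    -- for every 𝔞_k and each m, the map x ↦ G_m(x) − (x p_m/(1−α_m)) G_k'(𝔞_k)
    -- is strictly increasing
    (hGm : ∀ ak : ℝ, ∀ m ∈ Finset.Icc 1 (k - 1),
      StrictMono (fun x => G m x - x * p m / (1 - α m) * Gk' ak))
    (hGint : ∀ m ∈ Finset.Icc 1 k, Integrable (fun ω => G m (Y ω)) P)
    (S : (ℕ → ℝ) → ℝ → ℝ)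
    (hS : ∀ (a : ℕ → ℝ) (y : ℝ), S a y =
      (∑ m ∈ Finset.Icc 1 (k - 1),
        ((if y ≤ a m then (1:ℝ) else 0) - α m) * (G m (a m) - G m y))
      - G k (a k) + G k y
      + Gk' (a k) * (a k + ∑ m ∈ Finset.Icc 1 (k - 1),
          p m / (1 - α m) * (((if a m < y then (1:ℝ) else 0) - (1 - α m)) * a m
            - (if a m < y then (1:ℝ) else 0) * y)))
    (M : ℕ → ℝ)
    (hMvar : ∀ m ∈ Finset.Icc 1 (k - 1), M m = VaR P Y (α m))
    (hMspec : M k = ∑ m ∈ Finset.Icc 1 (k - 1), p m * CVaR P Y (α m)) :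
    ∀ a : ℕ → ℝ, (∀ m : ℕ, 1 ≤ m → m + 1 ≤ k - 1 → a m ≤ a (m + 1)) →
      (∃ m ∈ Finset.Icc 1 k, a m ≠ M m) →
      ∫ ω, S M (Y ω) ∂P < ∫ ω, S a (Y ω) ∂P :=
  spectral_score_strictly_consistent_general P k hk α p hα0 hα1 hαmono Y hYm hY huniq G Gk'
    hGkstrict hGm hGint S hS M hMvar hMspec
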